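/- Let a finite group G act on a finite set M. The number of isomorphism classes of irreducible complex representations of the action groupoid M//G equals the number of G-orbits of the set A = {(m,g) ∈ M × G : g·m = m}, where G acts on A by h·(m,g) = (h·m, h g h⁻¹). -/

import Mathlib

open Finset

/-- A finite-dimensional `K`-linear representation of the action groupoid `M//G`. -/
structure AGRep (K M G : Type) [Field K] [Fintype M] [Group G] [MulAction G M] where
  carrier : Type
  [acg : AddCommGroup carrier]
  [mod : Module K carrier]
  [fd : FiniteDimensional K carrier]
  P : M → Module.End K carrier
  rho : G →* Module.End K carrier
  proj_idem : ∀ m, P m * P m = P m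
  proj_orth : ∀ m n, m ≠ n → P m * P n = 0
  proj_sum : ∑ m : M, P m = 1
  compat : ∀ (g : G) (m : M), rho g * P m = P (g • m) * rho g

attribute [instance] AGRep.acg AGRep.mod AGRep.fd

variable {K M G : Type} [Field K] [Fintype M] [Group G] [MulAction G M]

/-- Irreducibility: no proper nonzero graded invariant subspace. -/
def AGRep.Irreducible (R : AGRep K M G) : Prop :=
  Nontrivial R.carrier ∧
    ∀ U : Submodule K R.carrier,
      (∀ g : G, U.map (R.rho g) ≤ U) → (∀ m : M, U.map (R.P m) ≤ U) →
        U = ⊥ ∨ U = ⊤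

/-- Isomorphism of representations of `M//G`. -/
def AGRep.Iso (R S : AGRep K M G) : Prop :=
  ∃ e : R.carrier ≃ₗ[K] S.carrier,
    (∀ (g : G) (v : R.carrier), e (R.rho g v) = S.rho g (e v)) ∧
    (∀ (m : M) (v : R.carrier), e (R.P m v) = S.P m (e v))

/-- The `G`-orbit relation on the set `A = {(m,g) : g·m = m}`, where `G` acts by
`h·(m,g) = (h·m, h g h⁻¹)`. -/
def fixRel (M G : Type) [Group G] [MulAction G M] :
    {p : M × G // p.2 • p.1 = p.1} → {p : M × G // p.2 • p.1 = p.1} → Prop :=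
  fun a b => ∃ h : G, h • a.1.1 = b.1.1 ∧ h * a.1.2 * h⁻¹ = b.1.2

/-!
The character `χ_V(m, g) = tr (P_m ρ_g)` vanishes unless `g • m = m` and is invariant under
`(m, g) ↦ (h • m, h g h⁻¹)`, so it is a class function, i.e. a function on the orbits of `A`.
Averaging `f ↦ ρ_g P_m f P_m ρ_g⁻¹` over `G` and `M` (`AGRep.average`) is `|G|` times a
projection of `Hom(V, W)` onto the intertwiners; its trace gives
`∑ χ_W(m, g) χ_V(m, g⁻¹) = |G| dim Hom_{M//G}(V, W)`, which by Schur's lemma is `|G|` or `0`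
for irreducible `V`, `W`. Conversely, a class function `f` defines the intertwiner
`T_f = ∑ f(m, g) ρ_g P_m` (`AGRep.classOp`) of trace `∑ f χ_V`. If `f` is orthogonal to all
irreducible characters, `T_f` is a scalar of trace zero on each irreducible, hence vanishes on
every representation by Maschke's theorem, in particular on the regular one, where it recovers
`f`. So the irreducible characters form a basis of the class functions.
-/

noncomputable section

open LinearMap
open scoped TensorProduct Classical

section LinearAlgebra

variable {V W : Type*} [AddCommGroup V] [Module K V] [AddCommGroup W] [Module K W]

def LinearMap.sandwich (a : W →ₗ[K] W) (b : V →ₗ[K] V) : (V →ₗ[K] W) →ₗ[K] (V →ₗ[K] W) where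
  toFun f := a ∘ₗ f ∘ₗ b
  map_add' f g := by ext; simp
  map_smul' c f := by ext; simp

theorem LinearMap.trace_sandwich [FiniteDimensional K V] [FiniteDimensional K W]
    (a : W →ₗ[K] W) (b : V →ₗ[K] V) :
    trace K _ (sandwich a b) = trace K W a * trace K V b := by
  have h : sandwich a b = (dualTensorHomEquiv K V W).conj (TensorProduct.map b.dualMap a) := by
    ext f : 1
    obtain ⟨t, rfl⟩ := (dualTensorHomEquiv K V W).surjective f
    rw [LinearEquiv.conj_apply_apply, LinearEquiv.symm_apply_apply]
    induction t using TensorProduct.induction_on with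
    | zero => simp
    | tmul φ w => ext x; simp [sandwich, dualTensorHomEquiv]
    | add s t hs ht => simp only [map_add, hs, ht]
  rw [h, trace_conj' (M := Module.Dual K V ⊗[K] W), trace_tensorProduct', mul_comm]
  exact congr(_ * $(trace_transpose' b))

theorem finrank_eq_card_of_injective_of_linearIndependent {ι : Type*} [Fintype ι]
    {φ : V →ₗ[K] ι → K} (hφ : Function.Injective φ) {v : ι → V}
    (hv : LinearIndependent K (φ ∘ v)) : Module.finrank K V = Fintype.card ι := by
  have := Module.Finite.of_injective φ hφ
  exact le_antisymm ((finrank_le_finrank_of_injective hφ).trans (Module.finrank_pi K).le)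
    (hv.of_comp φ).fintype_card_le_finrank

end LinearAlgebra

abbrev FixedPairs (M G : Type) [Group G] [MulAction G M] : Type :=
  {p : M × G // p.2 • p.1 = p.1}

def FixedPairs.conj (h : G) : FixedPairs M G ≃ FixedPairs M G where
  toFun a := ⟨(h • a.1.1, h * a.1.2 * h⁻¹), by simp [mul_smul, a.2]⟩
  invFun a := ⟨(h⁻¹ • a.1.1, h⁻¹ * a.1.2 * h), by simp [mul_smul, a.2]⟩
  left_inv a := by ext <;> simp [mul_assoc]
  right_inv a := by ext <;> simp [mul_assoc]

namespace AGRep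

section Basic

variable (R S : AGRep K M G)

lemma rho_inv_mul_rho (g : G) : R.rho g⁻¹ * R.rho g = 1 := by
  rw [← map_mul, inv_mul_cancel, map_one]

@[simp]
lemma rho_inv_apply_rho_apply (g : G) (x : R.carrier) : R.rho g⁻¹ (R.rho g x) = x := by
  rw [← Module.End.mul_apply, rho_inv_mul_rho, Module.End.one_apply]

@[simp]
lemma rho_apply_rho_inv_apply (g : G) (x : R.carrier) : R.rho g (R.rho g⁻¹ x) = x := by
  simpa only [inv_inv] using R.rho_inv_apply_rho_apply g⁻¹ x

lemma rho_apply_P_apply (g : G) (m : M) (x : R.carrier) :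
    R.rho g (R.P m x) = R.P (g • m) (R.rho g x) :=
  congr($(R.compat g m) x)

lemma P_apply_P_apply (m n : M) (x : R.carrier) :
    R.P m (R.P n x) = if m = n then R.P m x else 0 := by
  split_ifs with h
  · rw [h, ← Module.End.mul_apply, R.proj_idem]
  · rw [← Module.End.mul_apply, R.proj_orth m n h, LinearMap.zero_apply]

lemma sum_P_apply (x : R.carrier) : ∑ m : M, R.P m x = x := by
  rw [← LinearMap.sum_apply, R.proj_sum, Module.End.one_apply]

def char (m : M) (g : G) : K := trace K R.carrier (R.P m * R.rho g)

lemma char_smul_conj (h : G) (m : M) (g : G) :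
    R.char (h • m) (h * g * h⁻¹) = R.char m g := by
  have hconj : R.P (h • m) * R.rho (h * g * h⁻¹) = R.rho h * (R.P m * R.rho g * R.rho h⁻¹) := by
    rw [map_mul, map_mul, ← mul_assoc, ← mul_assoc, ← mul_assoc, ← R.compat]
    simp only [mul_assoc]
  rw [char, hconj, trace_mul_comm, mul_assoc, R.rho_inv_mul_rho, mul_one, char]

lemma char_eq_zero_of_smul_ne {m : M} {g : G} (hgm : g • m ≠ m) : R.char m g = 0 := calc
  R.char m g = trace K _ (R.rho g * R.P m * R.P m) := by
    rw [char, trace_mul_comm, mul_assoc, R.proj_idem]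
  _ = trace K _ (R.P (g • m) * R.rho g * R.P m) := by rw [R.compat]
  _ = trace K _ (R.rho g * R.P m * R.P (g • m)) := by rw [mul_assoc, trace_mul_comm]
  _ = 0 := by rw [mul_assoc, R.proj_orth _ _ hgm.symm, mul_zero, map_zero]

def Invariant (U : Submodule K R.carrier) : Prop :=
  (∀ g : G, U.map (R.rho g) ≤ U) ∧ ∀ m : M, U.map (R.P m) ≤ U

def intertwiners : Submodule K (R.carrier →ₗ[K] S.carrier) where
  carrier := {f | (∀ g x, f (R.rho g x) = S.rho g (f x)) ∧ ∀ m x, f (R.P m x) = S.P m (f x)}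
  add_mem' hf hg := ⟨fun g x => by simp [hf.1 g, hg.1 g], fun m x => by simp [hf.2 m, hg.2 m]⟩
  zero_mem' := ⟨fun _ _ => by simp, fun _ _ => by simp⟩
  smul_mem' c f hf := ⟨fun g x => by simp [hf.1 g], fun m x => by simp [hf.2 m]⟩

def sub (U : Submodule K R.carrier) (hU : R.Invariant U) : AGRep K M G where
  carrier := U
  P m := (R.P m).restrict fun x hx => hU.2 m ⟨x, hx, rfl⟩
  rho :=
    { toFun g := (R.rho g).restrict fun x hx => hU.1 g ⟨x, hx, rfl⟩
      map_one' := by ext; simp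
      map_mul' g h := by ext; simp }
  proj_idem m := by ext x; exact congr($(R.proj_idem m) x)
  proj_orth m n hmn := by ext x; exact congr($(R.proj_orth m n hmn) x)
  proj_sum := by ext x; simpa using congr($(R.proj_sum) x)
  compat g m := by ext x; exact congr($(R.compat g m) x)

end Basic

section Schur

variable {R S : AGRep K M G}

lemma id_mem_intertwiners : LinearMap.id ∈ intertwiners R R :=
  ⟨fun _ _ => rfl, fun _ _ => rfl⟩

lemma subtype_mem_intertwiners {U : Submodule K R.carrier} (hU : R.Invariant U) :
    U.subtype ∈ intertwiners (R.sub U hU) R :=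
  ⟨fun _ _ => rfl, fun _ _ => rfl⟩

lemma ker_invariant {f : R.carrier →ₗ[K] S.carrier} (hf : f ∈ intertwiners R S) :
    R.Invariant (ker f) := by
  refine ⟨fun g => ?_, fun m => ?_⟩ <;> rintro _ ⟨x, hx : f x = 0, rfl⟩
  · exact show f (R.rho g x) = 0 by rw [hf.1, hx, map_zero]
  · exact show f (R.P m x) = 0 by rw [hf.2, hx, map_zero]

lemma range_invariant {f : R.carrier →ₗ[K] S.carrier} (hf : f ∈ intertwiners R S) :
    S.Invariant (range f) := by
  refine ⟨fun g => ?_, fun m => ?_⟩ <;> rintro _ ⟨_, ⟨x, rfl⟩, rfl⟩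
  · exact ⟨R.rho g x, hf.1 g x⟩
  · exact ⟨R.P m x, hf.2 m x⟩

lemma eq_zero_or_bijective_of_mem_intertwiners (hR : R.Irreducible) (hS : S.Irreducible)
    {f : R.carrier →ₗ[K] S.carrier} (hf : f ∈ intertwiners R S) :
    f = 0 ∨ Function.Bijective f := by
  rcases hR.2 _ (ker_invariant hf).1 (ker_invariant hf).2 with hker | hker
  · rcases hS.2 _ (range_invariant hf).1 (range_invariant hf).2 with hrange | hrange
    · exact .inl (range_eq_bot.mp hrange)
    · exact .inr ⟨ker_eq_bot.mp hker, range_eq_top.mp hrange⟩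
  · exact .inl (ker_eq_top.mp hker)

lemma intertwiners_eq_bot_of_not_iso (hR : R.Irreducible) (hS : S.Irreducible)
    (h : ¬ R.Iso S) : intertwiners R S = ⊥ := by
  refine (Submodule.eq_bot_iff _).mpr fun f hf => by_contra fun hf0 => h ?_
  exact ⟨.ofBijective f ((eq_zero_or_bijective_of_mem_intertwiners hR hS hf).resolve_left hf0), hf⟩

lemma intertwiners_self_eq_span [IsAlgClosed K] (hR : R.Irreducible) :
    intertwiners R R = K ∙ LinearMap.id := by
  refine le_antisymm (fun f hf => ?_)
    ((Submodule.span_singleton_le_iff_mem _ _).mpr id_mem_intertwiners)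
  have := hR.1
  obtain ⟨μ, hμ⟩ := Module.End.exists_eigenvalue (f : Module.End K R.carrier)
  obtain ⟨x, hx⟩ := hμ.exists_hasEigenvector
  have hmem : f - μ • LinearMap.id ∈ intertwiners R R :=
    sub_mem hf (Submodule.smul_mem _ μ id_mem_intertwiners)
  have hzero := (eq_zero_or_bijective_of_mem_intertwiners hR hR hmem).resolve_right fun hbij =>
    hx.2 (hbij.1 (by simp [hx.apply_eq_smul]))
  rw [sub_eq_zero.mp hzero]
  exact Submodule.smul_mem _ _ (Submodule.mem_span_singleton_self _)

lemma finrank_intertwiners_self [IsAlgClosed K] (hR : R.Irreducible) :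
    Module.finrank K (intertwiners R R) = 1 := by
  have := hR.1
  rw [intertwiners_self_eq_span hR, finrank_span_singleton]
  obtain ⟨x, hx⟩ := exists_ne (0 : R.carrier)
  exact fun h => hx congr($h x)

end Schur

section Average

variable [Fintype G] {R S : AGRep K M G}

variable (R S) in
def average : Module.End K (R.carrier →ₗ[K] S.carrier) :=
  ∑ g : G, ∑ m : M, sandwich (S.rho g * S.P m) (R.P m * R.rho g⁻¹)

lemma average_apply_apply (f : R.carrier →ₗ[K] S.carrier) (x : R.carrier) :
    average R S f x = ∑ g : G, ∑ m : M, S.rho g (S.P m (f (R.P m (R.rho g⁻¹ x)))) := by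
  simp [average, sandwich, LinearMap.sum_apply]

lemma average_mem_intertwiners (f : R.carrier →ₗ[K] S.carrier) :
    average R S f ∈ intertwiners R S := by
  refine ⟨fun h x => ?_, fun n x => ?_⟩
  · simp only [average_apply_apply, map_sum]
    refine (Fintype.sum_equiv (Equiv.mulLeft h) _ _ fun g => ?_).symm
    simp [mul_inv_rev, Module.End.mul_apply]
  · simp only [average_apply_apply, map_sum]
    refine Finset.sum_congr rfl fun g _ => Finset.sum_congr rfl fun m _ => ?_
    simp only [rho_apply_P_apply _ g⁻¹ n, rho_apply_P_apply S g m, P_apply_P_apply,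
      eq_inv_smul_iff, eq_comm (a := n)]
    split_ifs with h
    · rw [h]
    · simp

lemma average_eq_card_smul {f : R.carrier →ₗ[K] S.carrier} (hf : f ∈ intertwiners R S) :
    average R S f = (Fintype.card G : K) • f := by
  ext x
  have hterm (g : G) (m : M) :
      S.rho g (S.P m (f (R.P m (R.rho g⁻¹ x)))) = S.rho g (S.P m (f (R.rho g⁻¹ x))) := by
    rw [hf.2, P_apply_P_apply, if_pos rfl]
  simp only [average_apply_apply, hterm, ← map_sum, sum_P_apply, ← hf.1, rho_apply_rho_inv_apply,
    map_nsmul, Finset.sum_const, Finset.card_univ, LinearMap.smul_apply, Nat.cast_smul_eq_nsmul]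

lemma average_comp {T : AGRep K M G} {f' : T.carrier →ₗ[K] R.carrier}
    (hf' : f' ∈ intertwiners T R) (f : R.carrier →ₗ[K] S.carrier) :
    average R S f ∘ₗ f' = average T S (f ∘ₗ f') := by
  ext x
  simp [average_apply_apply, hf'.1, hf'.2]

variable (R S) in
lemma trace_average :
    trace K _ (average R S) = ∑ g : G, ∑ m : M, S.char m g * R.char m g⁻¹ := by
  simp only [average, map_sum, trace_sandwich, char, trace_mul_comm K (S.rho _)]

variable (R S) in
lemma trace_average_eq_card_mul_finrank [NeZero (Fintype.card G : K)] :
    trace K _ (average R S) = Fintype.card G * Module.finrank K (intertwiners R S) := by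
  have hproj : IsProj (intertwiners R S) ((Fintype.card G : K)⁻¹ • average R S) :=
    ⟨fun f => Submodule.smul_mem _ _ (average_mem_intertwiners f), fun f hf => by
      rw [LinearMap.smul_apply, average_eq_card_smul hf, inv_smul_smul₀ (NeZero.ne _)]⟩
  rw [← hproj.trace, map_smul, smul_eq_mul, mul_inv_cancel_left₀ (NeZero.ne _)]

lemma exists_isCompl_invariant [NeZero (Fintype.card G : K)]
    {U : Submodule K R.carrier} (hU : R.Invariant U) :
    ∃ U', R.Invariant U' ∧ IsCompl U U' := by
  obtain ⟨W, hW⟩ := Submodule.exists_isCompl U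
  let ι : (R.sub U hU).carrier →ₗ[K] R.carrier := U.subtype
  let p : R.carrier →ₗ[K] (R.sub U hU).carrier := U.projectionOnto W hW
  have hp : p ∘ₗ ι = LinearMap.id := U.projectionOnto_comp_subtype hW
  -- averaging `p` keeps it a retraction of the inclusion and makes it an intertwiner
  let q : R.carrier →ₗ[K] (R.sub U hU).carrier := (Fintype.card G : K)⁻¹ • average R _ p
  have hq : ∀ x : U, q x = x := fun x => by
    have h := congr($(average_comp (subtype_mem_intertwiners hU) p) x)
    rw [hp, average_eq_card_smul id_mem_intertwiners] at h
    change (Fintype.card G : K)⁻¹ • (average R _ p ∘ₗ ι) x = x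
    rw [h]
    exact inv_smul_smul₀ (NeZero.ne _) x
  exact ⟨ker q, ker_invariant (Submodule.smul_mem _ _ (average_mem_intertwiners p)),
    isCompl_of_proj hq⟩

theorem induction_on_irreducible [NeZero (Fintype.card G : K)]
    {Q : AGRep K M G → Prop}
    (subsingleton : ∀ R : AGRep K M G, Subsingleton R.carrier → Q R)
    (irreducible : ∀ R : AGRep K M G, R.Irreducible → Q R)
    (isCompl : ∀ (R : AGRep K M G) (U U' : Submodule K R.carrier) (hU : R.Invariant U)
      (hU' : R.Invariant U'), IsCompl U U' → Q (R.sub U hU) → Q (R.sub U' hU') → Q R)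
    (R : AGRep K M G) : Q R := by
  induction hn : Module.finrank K R.carrier using Nat.strong_induction_on generalizing R with
  | _ n ih =>
  rcases subsingleton_or_nontrivial R.carrier with hR | hR
  · exact subsingleton R hR
  by_cases hirr : R.Irreducible
  · exact irreducible R hirr
  obtain ⟨U, hUrho, hUP, hU_ne_bot, hU_ne_top⟩ : ∃ U : Submodule K R.carrier,
      (∀ g : G, U.map (R.rho g) ≤ U) ∧ (∀ m : M, U.map (R.P m) ≤ U) ∧ U ≠ ⊥ ∧ U ≠ ⊤ := by
    simpa [Irreducible, hR, not_or] using hirr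
  have hU : R.Invariant U := ⟨hUrho, hUP⟩
  obtain ⟨U', hU', hUU'⟩ := exists_isCompl_invariant hU
  have hU'_ne_top : U' ≠ ⊤ := fun h => hU_ne_bot (disjoint_top.mp (h ▸ hUU'.disjoint))
  exact isCompl R U U' hU hU' hUU' (ih _ (hn ▸ Submodule.finrank_lt hU_ne_top) (R.sub U hU) rfl)
    (ih _ (hn ▸ Submodule.finrank_lt hU'_ne_top) (R.sub U' hU') rfl)

end Average

section ClassFunctions

variable [Fintype G] {R S : AGRep K M G}

variable (R) in
def classOp : (Quot (fixRel M G) → K) →ₗ[K] Module.End K R.carrier :=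
  ∑ a : FixedPairs M G, (LinearMap.proj (Quot.mk _ a)).smulRight (R.rho a.1.2 * R.P a.1.1)

lemma classOp_apply_apply (f : Quot (fixRel M G) → K) (x : R.carrier) :
    R.classOp f x = ∑ a : FixedPairs M G, f (Quot.mk _ a) • R.rho a.1.2 (R.P a.1.1 x) := by
  simp [classOp, LinearMap.sum_apply]

lemma trace_classOp (f : Quot (fixRel M G) → K) :
    trace K R.carrier (R.classOp f) =
      ∑ a : FixedPairs M G, f (Quot.mk _ a) * R.char a.1.1 a.1.2 := by
  simp [classOp, char, trace_mul_comm K (R.rho _)]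

lemma classOp_mem_intertwiners (f : Quot (fixRel M G) → K) :
    R.classOp f ∈ intertwiners R R := by
  refine ⟨fun h x => ?_, fun n x => ?_⟩
  · simp only [classOp_apply_apply, map_sum, map_smul]
    refine (Fintype.sum_equiv (FixedPairs.conj h) _ _ fun a => ?_).symm
    change _ = f _ • R.rho (h * a.1.2 * h⁻¹) (R.P (h • a.1.1) (R.rho h x))
    have hconj (y : R.carrier) :
        R.rho (h * a.1.2 * h⁻¹) (R.rho h y) = R.rho h (R.rho a.1.2 y) := by
      rw [← Module.End.mul_apply, ← map_mul, inv_mul_cancel_right, map_mul, Module.End.mul_apply]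
    rw [show Quot.mk (fixRel M G) (FixedPairs.conj h a) = Quot.mk _ a from
      (Quot.sound ⟨h, rfl, rfl⟩).symm, ← rho_apply_P_apply, hconj]
  · simp only [classOp_apply_apply, map_sum, map_smul]
    refine Finset.sum_congr rfl fun a _ => ?_
    rw [P_apply_P_apply, rho_apply_P_apply R a.1.2 a.1.1, a.2, P_apply_P_apply]
    rcases eq_or_ne a.1.1 n with h | h
    · rw [if_pos h, if_pos h.symm, ← h, rho_apply_P_apply, a.2]
    · rw [if_neg h, if_neg (Ne.symm h), map_zero]

lemma apply_classOp_apply_of_mem_intertwiners {φ : R.carrier →ₗ[K] S.carrier}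
    (hφ : φ ∈ intertwiners R S) (f : Quot (fixRel M G) → K) (x : R.carrier) :
    φ (R.classOp f x) = S.classOp f (φ x) := by
  simp [classOp_apply_apply, hφ.1, hφ.2]

lemma classOp_eq_zero_of_iso (e : R.Iso S) {f : Quot (fixRel M G) → K}
    (hS : S.classOp f = 0) : R.classOp f = 0 := by
  obtain ⟨e, he_rho, he_P⟩ := e
  ext x
  have h := apply_classOp_apply_of_mem_intertwiners (φ := e.toLinearMap) ⟨he_rho, he_P⟩ f x
  rw [hS] at h
  simpa using h

lemma classOp_eq_zero_of_trace_eq_zero [IsAlgClosed K] [CharZero K] (hR : R.Irreducible)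
    {f : Quot (fixRel M G) → K} (hf : trace K R.carrier (R.classOp f) = 0) :
    R.classOp f = 0 := by
  have := hR.1
  obtain ⟨μ, hμ⟩ := Submodule.mem_span_singleton.mp
    (intertwiners_self_eq_span hR ▸ classOp_mem_intertwiners f)
  rw [← hμ, map_smul, trace_id, smul_eq_mul, mul_eq_zero, Nat.cast_eq_zero] at hf
  rw [← hμ, hf.resolve_right Module.finrank_pos.ne', zero_smul]

lemma classOp_eq_zero_of_forall_irreducible [NeZero (Fintype.card G : K)]
    {f : Quot (fixRel M G) → K} (hf : ∀ R : AGRep K M G, R.Irreducible → R.classOp f = 0)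
    (R : AGRep K M G) : R.classOp f = 0 := by
  induction R using induction_on_irreducible with
  | subsingleton R hR => exact Subsingleton.elim _ _
  | irreducible R hR => exact hf R hR
  | isCompl R U U' hU hU' hUU' ihU ihU' =>
    have hvanish {W : Submodule K R.carrier} (hW : R.Invariant W)
        (ih : (R.sub W hW).classOp f = 0) (x : R.carrier) (hx : x ∈ W) : R.classOp f x = 0 := by
      have h := apply_classOp_apply_of_mem_intertwiners (subtype_mem_intertwiners hW) f ⟨x, hx⟩
      rw [ih] at h
      exact h.symm.trans (map_zero W.subtype)
    ext x
    have hx : x ∈ U ⊔ U' := hUU'.sup_eq_top ▸ Submodule.mem_top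
    obtain ⟨y, hy, z, hz, rfl⟩ := Submodule.mem_sup.mp hx
    simp [hvanish hU ihU y hy, hvanish hU' ihU' z hz]

variable (K M G) in
abbrev regular : AGRep K M G where
  carrier := M × G → K
  P n :=
    { toFun φ p := if p.2 • p.1 = n then φ p else 0
      map_add' φ ψ := by ext p; by_cases h : p.2 • p.1 = n <;> simp [h]
      map_smul' c φ := by ext p; by_cases h : p.2 • p.1 = n <;> simp [h] }
  rho :=
    { toFun h := LinearMap.funLeft K K fun p : M × G => (p.1, h⁻¹ * p.2)
      map_one' := by ext; simp
      map_mul' g h := by ext; simp [mul_assoc] }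
  proj_idem m := LinearMap.ext fun φ => funext fun p => by
    by_cases h : p.2 • p.1 = m <;> simp [h]
  proj_orth m n hmn := LinearMap.ext fun φ => funext fun p => by
    by_cases h : p.2 • p.1 = m <;> simp [h, hmn]
  proj_sum := LinearMap.ext fun φ => funext fun p => by simp [Finset.sum_apply]
  compat g m := LinearMap.ext fun φ => funext fun p => by simp [mul_smul, inv_smul_eq_iff]

lemma regular_classOp_single_apply (f : Quot (fixRel M G) → K) (a : FixedPairs M G) :
    ((regular K M G).classOp f (Pi.single (a.1.1, 1) 1) : M × G → K) a.1 =
      f (Quot.mk _ a) := by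
  rw [classOp_apply_apply, Finset.sum_apply, Finset.sum_eq_single a]
  · simp [regular]
  · rintro ⟨⟨m, g⟩, hgm⟩ _ hne
    simp [regular, Pi.single_apply]
    intro hm hg
    rw [inv_mul_eq_one] at hg
    rw [← hg, inv_mul_cancel, one_smul] at hm
    exact absurd (Subtype.ext (Prod.ext hm.symm hg)) hne
  · simp

lemma eq_zero_of_regular_classOp_eq_zero {f : Quot (fixRel M G) → K}
    (hf : (regular K M G).classOp f = 0) : f = 0 := by
  funext q
  induction q using Quot.ind with | mk a => ?_
  rw [← regular_classOp_single_apply f a, hf]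
  rfl

lemma eq_zero_of_forall_trace_classOp_eq_zero [IsAlgClosed K] [CharZero K] {ι : Type*}
    (V : ι → AGRep K M G) (hirr : ∀ i, (V i).Irreducible)
    (hcomp : ∀ W : AGRep K M G, W.Irreducible → ∃ i, W.Iso (V i))
    {f : Quot (fixRel M G) → K} (hf : ∀ i, trace K _ ((V i).classOp f) = 0) : f = 0 := by
  refine eq_zero_of_regular_classOp_eq_zero (classOp_eq_zero_of_forall_irreducible ?_ _)
  intro R hR
  obtain ⟨i, e⟩ := hcomp R hR
  exact classOp_eq_zero_of_iso e (classOp_eq_zero_of_trace_eq_zero (hirr i) (hf i))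

variable (R) in
def invChar : Quot (fixRel M G) → K :=
  Quot.lift (fun a => R.char a.1.1 a.1.2⁻¹) fun a b ⟨h, hm, hg⟩ => by
    rw [← hm, ← hg, show (h * a.1.2 * h⁻¹)⁻¹ = h * a.1.2⁻¹ * h⁻¹ by group, char_smul_conj]

lemma trace_classOp_invChar :
    trace K S.carrier (S.classOp R.invChar) = trace K _ (average R S) := by
  let F : M × G → K := fun p => S.char p.1 p.2 * R.char p.1 p.2⁻¹
  have hvanish : ∑ a : {p : M × G // ¬ p.2 • p.1 = p.1}, F a = 0 :=
    Finset.sum_eq_zero fun a _ => by simp [F, S.char_eq_zero_of_smul_ne a.2]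
  calc trace K S.carrier (S.classOp R.invChar) = ∑ a : FixedPairs M G, F a := by
        simp only [trace_classOp, F, mul_comm]; rfl
    _ = ∑ p : M × G, F p := by
        rw [← Fintype.sum_subtype_add_sum_subtype (fun p => p.2 • p.1 = p.1) F, hvanish, add_zero]
    _ = trace K _ (average R S) := by rw [trace_average, Fintype.sum_prod_type, Finset.sum_comm]

lemma trace_classOp_invChar_self [IsAlgClosed K] [NeZero (Fintype.card G : K)]
    (hR : R.Irreducible) : trace K _ (R.classOp R.invChar) = Fintype.card G := by
  rw [trace_classOp_invChar, trace_average_eq_card_mul_finrank, finrank_intertwiners_self hR,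
    Nat.cast_one, mul_one]

lemma trace_classOp_invChar_of_not_iso [NeZero (Fintype.card G : K)] (hR : R.Irreducible)
    (hS : S.Irreducible) (h : ¬ R.Iso S) : trace K _ (S.classOp R.invChar) = 0 := by
  rw [trace_classOp_invChar, trace_average_eq_card_mul_finrank,
    intertwiners_eq_bot_of_not_iso hR hS h, finrank_bot, Nat.cast_zero, mul_zero]

end ClassFunctions

end AGRep

end

/-- The number of isomorphism classes of irreducible complex representations of the
action groupoid `M//G` (for `G` a finite group acting on a finite set `M`) equals the
number of `G`-orbits of `A = {(m,g) : g·m = m}` under `h·(m,g) = (h·m, hgh⁻¹)`. -/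
theorem agRep_card_irreducibles [Fintype G]
    {ι : Type} [Fintype ι] (V : ι → AGRep ℂ M G)
    (hirr : ∀ i, (V i).Irreducible)
    (hdist : ∀ i j, i ≠ j → ¬ (V i).Iso (V j))
    (hcomp : ∀ W : AGRep ℂ M G, W.Irreducible → ∃ i, W.Iso (V i)) :
    Fintype.card ι = Nat.card (Quot (fixRel M G)) := by
  classical
  let pairing : (Quot (fixRel M G) → ℂ) →ₗ[ℂ] ι → ℂ :=
    LinearMap.pi fun i => LinearMap.trace ℂ _ ∘ₗ (V i).classOp
  have hinj : Function.Injective pairing := by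
    rw [← LinearMap.ker_eq_bot, Submodule.eq_bot_iff]
    exact fun f hf => AGRep.eq_zero_of_forall_trace_classOp_eq_zero V hirr hcomp
      (congr_fun (LinearMap.mem_ker.mp hf))
  have horth : pairing ∘ (fun j => (V j).invChar) =
      fun j => Pi.single j (Fintype.card G : ℂ) := by
    funext j i
    rcases eq_or_ne i j with rfl | hij
    · simp [pairing, AGRep.trace_classOp_invChar_self (hirr i)]
    · simp [pairing, hij,
        AGRep.trace_classOp_invChar_of_not_iso (hirr j) (hirr i) (hdist j i hij.symm)]
  have := Fintype.ofFinite (Quot (fixRel M G))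
  calc Fintype.card ι = Module.finrank ℂ (Quot (fixRel M G) → ℂ) :=
        (finrank_eq_card_of_injective_of_linearIndependent hinj
          (horth ▸ Pi.linearIndependent_single_of_ne_zero fun _ => NeZero.ne _)).symm
    _ = Nat.card (Quot (fixRel M G)) := by rw [Module.finrank_pi, Nat.card_eq_fintype_card]
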